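/- Let R be a commutative ring with unity, k ∈ ℕ, and I ⊊ R an ideal which satisfies the unital set condition. Then the reduction map SL_k(R) → SL_k(R/I) is surjective. -/

import Mathlib

/-!
The USC makes `R ⧸ I` a ring of stable range one: lift a unimodular row over `R ⧸ I`, adjoin an
element `t ∈ I` that makes the lift unimodular over `R`, and reduce the resulting unit mod `I`.
Over a ring of stable range one, a column operation puts a unit in the corner of
`M ∈ SL_{k+1}`, and shear matrices (elementary operations along the first row or column), which
lift along every surjection, bring `M` to `diag(1, N)`; `N` lifts by induction on `k`.
-/

open scoped MatrixGroups

/-- An ideal `I` of a commutative ring `R` satisfies the unital set condition (USC) if for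
every `k ≥ 2` and every unital tuple `a_1, …, a_k` (i.e. `(a_1) + ⋯ + (a_k) = R`) there
exists `b` in the ideal `(a_2, …, a_k)` such that `a_1 + b` is a unit modulo `I`. -/
def UnitalSetCondition {R : Type*} [CommRing R] (I : Ideal R) : Prop :=
  ∀ k : ℕ, ∀ _ : 2 ≤ k, ∀ a : Fin k → R, (∑ i, Ideal.span {a i} = ⊤) →
    ∃ b ∈ Ideal.span (a '' {i | (i : ℕ) ≠ 0}),
      IsUnit (Ideal.Quotient.mk I (a ⟨0, by omega⟩ + b))

/-- Bass's condition `sr(S) = 1`, in its (equivalent) form for unimodular rows of any length. -/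
def HasStableRangeOne (S : Type*) [CommRing S] : Prop :=
  ∀ (k : ℕ) (r : Fin (k + 1) → S), Ideal.span (Set.range r) = ⊤ →
    ∃ c : Fin k → S, IsUnit (r 0 + ∑ p, c p * r p.succ)

theorem UnitalSetCondition.hasStableRangeOne {R : Type*} [CommRing R] {I : Ideal R}
    (husc : UnitalSetCondition I) : HasStableRangeOne (R ⧸ I) := by
  intro k r hr
  obtain ⟨a, rfl⟩ : ∃ a : Fin (k + 1) → R, Ideal.Quotient.mk I ∘ a = r :=
    ⟨Function.surjInv Ideal.Quotient.mk_surjective ∘ r,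
      funext fun i => Function.surjInv_eq Ideal.Quotient.mk_surjective (r i)⟩
  obtain ⟨x, hx, hx1⟩ : ∃ x ∈ Ideal.span (Set.range a), Ideal.Quotient.mk I x = 1 := by
    rw [← Ideal.mem_map_iff_of_surjective _ Ideal.Quotient.mk_surjective, Ideal.map_span,
      ← Set.range_comp, hr]
    trivial
  set t := 1 - x
  have ht : Ideal.Quotient.mk I t = 0 := by simp [t, hx1]
  let a' : Fin (k + 2) → R := Fin.cons (a 0) (Fin.cons t (Fin.tail a))
  have htop : ∑ i, Ideal.span {a' i} = ⊤ := by
    rw [Ideal.sum_eq_sup, Finset.sup_univ_eq_iSup, ← Ideal.span_range_eq_iSup,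
      Ideal.eq_top_iff_one, show (1 : R) = x + t by ring]
    refine add_mem (Ideal.span_mono ?_ hx) (Ideal.subset_span ⟨(0 : Fin (k + 1)).succ, rfl⟩)
    rw [Fin.range_fin_succ a]
    simpa [a'] using Set.insert_subset_insert (Set.subset_insert _ _)
  obtain ⟨b, hb, hunit⟩ := husc (k + 2) (by omega) a' htop
  have himage : a' '' {i | (i : ℕ) ≠ 0} = insert t (Set.range (Fin.tail a)) := by
    have hne : {i : Fin (k + 2) | (i : ℕ) ≠ 0} = Set.range Fin.succ := by
      rw [Fin.range_succ]; ext i; exact Fin.val_ne_zero_iff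
    rw [hne, ← Set.range_comp, Fin.cons_comp_succ, Fin.range_cons]
  rw [himage, Ideal.mem_span_insert] at hb
  obtain ⟨d, z, hz, rfl⟩ := hb
  obtain ⟨c, rfl⟩ := Ideal.mem_span_range_iff_exists_fun.mp hz
  refine ⟨Ideal.Quotient.mk I ∘ c, ?_⟩
  convert hunit using 1
  simp [a', ht, map_sum, Fin.tail]

namespace Matrix.SpecialLinearGroup

theorem span_range_row_eq_top {n S : Type*} [Fintype n] [DecidableEq n] [CommRing S]
    (A : SpecialLinearGroup n S) (i : n) : Ideal.span (Set.range (A i)) = ⊤ := by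
  have hdet : (A : Matrix n n S).det ∈ Ideal.span (Set.range (A i)) := by
    rw [det_eq_sum_mul_adjugate_row _ i]
    exact Ideal.sum_mem _ fun j _ => Ideal.mul_mem_right _ _ (Ideal.subset_span ⟨j, rfl⟩)
  rwa [A.det_coe, ← Ideal.eq_top_iff_one] at hdet

variable {R S : Type*} [CommRing R] [CommRing S] {k : ℕ}

def lowerShear (v : Fin k → S) : SL(k + 1, S) where
  val := of fun i j => if i = j then 1 else if j = 0 then (Fin.cons 0 v : Fin (k + 1) → S) i else 0
  property := by
    refine (det_of_isLowerTriangular _ fun i j (hij : i < j) => ?_).trans (by simp)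
    have hj : j ≠ 0 := Fin.pos_iff_ne_zero.mp (i.zero_le.trans_lt hij)
    simp [hij.ne, hj]

def upperShear (v : Fin k → S) : SL(k + 1, S) :=
  (lowerShear v).transpose

variable (A : SL(k + 1, S)) (v : Fin k → S)

theorem lowerShear_apply (i j : Fin (k + 1)) :
    lowerShear v i j =
      if i = j then 1 else if j = 0 then (Fin.cons 0 v : Fin (k + 1) → S) i else 0 :=
  rfl

theorem upperShear_apply (i j : Fin (k + 1)) : upperShear v i j = lowerShear v j i :=
  rfl

theorem mul_lowerShear_apply_zero (i : Fin (k + 1)) :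
    (A * lowerShear v) i 0 = A i 0 + ∑ p, v p * A i p.succ := by
  simp [lowerShear_apply, coe_mul, mul_apply, Fin.sum_univ_succ, Fin.succ_ne_zero, mul_comm]

theorem lowerShear_mul_apply_zero (j : Fin (k + 1)) : (lowerShear v * A) 0 j = A 0 j := by
  simp [lowerShear_apply, coe_mul, mul_apply]

theorem lowerShear_mul_apply_succ (p : Fin k) (j : Fin (k + 1)) :
    (lowerShear v * A) p.succ j = A p.succ j + v p * A 0 j := by
  simp [lowerShear_apply, coe_mul, mul_apply, Fin.sum_univ_succ, Fin.succ_ne_zero, ite_mul,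
    add_comm]

theorem upperShear_mul_apply_zero (j : Fin (k + 1)) :
    (upperShear v * A) 0 j = A 0 j + ∑ p, v p * A p.succ j := by
  simp [upperShear_apply, lowerShear_apply, coe_mul, mul_apply, Fin.sum_univ_succ,
    Fin.succ_ne_zero]

theorem mul_upperShear_apply_zero (i : Fin (k + 1)) : (A * upperShear v) i 0 = A i 0 := by
  simp [upperShear_apply, lowerShear_apply, coe_mul, mul_apply]

theorem mul_upperShear_apply_succ (i : Fin (k + 1)) (p : Fin k) :
    (A * upperShear v) i p.succ = A i p.succ + A i 0 * v p := by
  simp [upperShear_apply, lowerShear_apply, coe_mul, mul_apply, Fin.sum_univ_succ,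
    Fin.succ_ne_zero, mul_ite, add_comm]

theorem map_lowerShear (f : R →+* S) (w : Fin k → R) :
    map f (lowerShear w) = lowerShear (f ∘ w) := by
  ext i j
  rcases Fin.eq_zero_or_eq_succ i with rfl | ⟨p, rfl⟩ <;> simp [lowerShear_apply, apply_ite f]

theorem map_upperShear (f : R →+* S) (w : Fin k → R) :
    map f (upperShear w) = upperShear (f ∘ w) := by
  ext i j
  rw [upperShear_apply, ← map_lowerShear]
  rfl

variable (S k) in
def shearSubgroup : Subgroup SL(k + 1, S) :=
  Subgroup.closure (Set.range lowerShear ∪ Set.range upperShear)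

theorem lowerShear_mem_shearSubgroup : lowerShear v ∈ shearSubgroup S k :=
  Subgroup.subset_closure (.inl ⟨v, rfl⟩)

theorem upperShear_mem_shearSubgroup : upperShear v ∈ shearSubgroup S k :=
  Subgroup.subset_closure (.inr ⟨v, rfl⟩)

theorem shearSubgroup_le_range_map {f : R →+* S} (hf : Function.Surjective f) :
    shearSubgroup S k ≤ (map f).range := by
  have hlift (v : Fin k → S) : f ∘ Function.surjInv hf ∘ v = v :=
    funext fun p => Function.surjInv_eq hf (v p)
  refine (Subgroup.closure_le _).mpr ?_
  rintro _ (⟨v, rfl⟩ | ⟨v, rfl⟩)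
  · exact ⟨lowerShear (Function.surjInv hf ∘ v), by rw [map_lowerShear, hlift]⟩
  · exact ⟨upperShear (Function.surjInv hf ∘ v), by rw [map_upperShear, hlift]⟩

def extendOne (N : SL(k, S)) : SL(k + 1, S) where
  val := of (Fin.cons (Pi.single 0 1) fun p => Fin.cons 0 (N p))
  property := by
    rw [det_succ_row_zero, Fin.sum_univ_succ]
    simp [submatrix]
    exact N.det_coe

theorem extendOne_apply (N : SL(k, S)) (i j : Fin (k + 1)) :
    extendOne N i j = (Fin.cons (Pi.single 0 1) fun p => Fin.cons 0 (N p) : Matrix _ _ S) i j :=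
  rfl

theorem map_extendOne (f : R →+* S) (N : SL(k, R)) :
    map f (extendOne N) = extendOne (map f N) := by
  ext i j
  rcases Fin.eq_zero_or_eq_succ i with rfl | ⟨p, rfl⟩ <;>
    rcases Fin.eq_zero_or_eq_succ j with rfl | ⟨q, rfl⟩ <;> simp [extendOne_apply]

theorem exists_eq_extendOne (h00 : A 0 0 = 1) (hrow : ∀ q : Fin k, A 0 q.succ = 0)
    (hcol : ∀ p : Fin k, A p.succ 0 = 0) : ∃ N, A = extendOne N := by
  have hdet : ((A : Matrix (Fin (k + 1)) (Fin (k + 1)) S).submatrix Fin.succ Fin.succ).det = 1 := by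
    simpa [det_succ_row_zero (A : Matrix (Fin (k + 1)) (Fin (k + 1)) S), Fin.sum_univ_succ, h00,
      hrow] using A.det_coe
  refine ⟨⟨_, hdet⟩, ?_⟩
  ext i j
  rcases Fin.eq_zero_or_eq_succ i with rfl | ⟨p, rfl⟩ <;>
    rcases Fin.eq_zero_or_eq_succ j with rfl | ⟨q, rfl⟩ <;> simp [extendOne, h00, hrow, hcol]

theorem exists_mem_shearSubgroup_mul_apply_zero_zero_eq_one (hA : IsUnit (A 0 0)) :
    ∃ P ∈ shearSubgroup S k, (P * A) 0 0 = 1 := by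
  cases k with
  | zero => exact ⟨1, one_mem _, by simpa [det_fin_one] using A.det_coe⟩
  | succ k =>
    -- make `A 0 0 + A 1 0 = 1` by a row operation, then add row `1` to row `0`
    let c : S := ↑hA.unit⁻¹ * (1 - A 0 0 - A 1 0)
    have hc : c * A 0 0 = 1 - A 0 0 - A 1 0 := by rw [mul_right_comm, hA.val_inv_mul, one_mul]
    refine ⟨upperShear (Pi.single 0 1) * lowerShear (Pi.single 0 c),
      mul_mem (upperShear_mem_shearSubgroup _) (lowerShear_mem_shearSubgroup _), ?_⟩
    rw [mul_assoc, upperShear_mul_apply_zero]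
    simp [Pi.single_apply, lowerShear_mul_apply_zero, lowerShear_mul_apply_succ, hc]

theorem exists_mul_mul_eq_extendOne_of_apply_zero_zero_eq_one (hA : A 0 0 = 1) :
    ∃ P ∈ shearSubgroup S k, ∃ Q ∈ shearSubgroup S k, ∃ N, P * A * Q = extendOne N := by
  set P := lowerShear fun p => -A p.succ 0
  set Q := upperShear fun p => -(P * A) 0 p.succ
  refine ⟨P, lowerShear_mem_shearSubgroup _, Q, upperShear_mem_shearSubgroup _,
    exists_eq_extendOne _ ?_ (fun q => ?_) (fun p => ?_)⟩
  · rw [mul_upperShear_apply_zero, lowerShear_mul_apply_zero, hA]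
  · rw [mul_upperShear_apply_succ, lowerShear_mul_apply_zero, lowerShear_mul_apply_zero, hA]
    ring
  · rw [mul_upperShear_apply_zero, lowerShear_mul_apply_succ, hA]
    ring

theorem exists_mul_mul_eq_extendOne (hA : IsUnit (A 0 0)) :
    ∃ P ∈ shearSubgroup S k, ∃ Q ∈ shearSubgroup S k, ∃ N, P * A * Q = extendOne N := by
  obtain ⟨P₁, hP₁, h₁⟩ := exists_mem_shearSubgroup_mul_apply_zero_zero_eq_one A hA
  obtain ⟨P, hP, Q, hQ, N, h⟩ := exists_mul_mul_eq_extendOne_of_apply_zero_zero_eq_one _ h₁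
  exact ⟨P * P₁, mul_mem hP hP₁, Q, hQ, N, by rwa [mul_assoc P]⟩

theorem map_surjective_of_hasStableRangeOne {f : R →+* S} (hf : Function.Surjective f)
    (hS : HasStableRangeOne S) (n : ℕ) : Function.Surjective (map f : SL(n, R) → SL(n, S)) := by
  induction n with
  | zero => exact fun M => ⟨1, Subsingleton.elim _ _⟩
  | succ k ih =>
    intro M
    obtain ⟨c, hc⟩ := hS k (M 0) (M.span_range_row_eq_top 0)
    rw [← mul_lowerShear_apply_zero] at hc
    obtain ⟨P, hP, Q, hQ, N, hPMQ⟩ := exists_mul_mul_eq_extendOne _ hc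
    obtain ⟨N, rfl⟩ := ih N
    have hM : M = P⁻¹ * extendOne (map f N) * Q⁻¹ * (lowerShear c)⁻¹ := by
      rw [← hPMQ]; group
    have hE := shearSubgroup_le_range_map (k := k) hf
    rw [← MonoidHom.mem_range, hM, ← map_extendOne]
    exact mul_mem (mul_mem (mul_mem (inv_mem (hE hP)) ⟨_, rfl⟩) (inv_mem (hE hQ)))
      (inv_mem (hE (lowerShear_mem_shearSubgroup c)))

end Matrix.SpecialLinearGroup

theorem sl_reduction_surjective_general {R : Type*} [CommRing R] (k : ℕ) (I : Ideal R)
    (husc : UnitalSetCondition I) :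
    Function.Surjective
      (Matrix.SpecialLinearGroup.map (n := Fin k) (Ideal.Quotient.mk I) :
        Matrix.SpecialLinearGroup (Fin k) R → Matrix.SpecialLinearGroup (Fin k) (R ⧸ I)) :=
  Matrix.SpecialLinearGroup.map_surjective_of_hasStableRangeOne Ideal.Quotient.mk_surjective
    husc.hasStableRangeOne k

/-- Let `R` be a commutative ring with unity, `k ∈ ℕ`, and `I ⊊ R` an ideal
satisfying the unital set condition. Then the reduction map `SL_k(R) → SL_k(R/I)` is
surjective. -/
theorem sl_reduction_surjective {R : Type*} [CommRing R] (k : ℕ) (I : Ideal R) (hI : I ≠ ⊤)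
    (husc : UnitalSetCondition I) :
    Function.Surjective
      (Matrix.SpecialLinearGroup.map (n := Fin k) (Ideal.Quotient.mk I) :
        Matrix.SpecialLinearGroup (Fin k) R → Matrix.SpecialLinearGroup (Fin k) (R ⧸ I)) :=
  sl_reduction_surjective_general k I husc
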